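/- Let A = M_d(ℂ) and consider the Hilbert A-module H_d = ℂ^d with module action a·ξ = a(ξ) and generalized inner product [ξ, ζ] = ξ ⊗ ζ (the rank-one operator η ↦ ⟨η, ζ⟩ξ). If T : H_d → H_d is any function satisfying |[Tξ, Tζ]| = |[ξ, ζ]| for all ξ, ζ ∈ H_d, then for every ζ ∈ H_d there is a scalar μ(ζ) of modulus 1 with Tζ = μ(ζ) ζ. -/

import Mathlib

open scoped ComplexOrder
open Matrix

/-- The absolute value `|a| = (a*a)^{1/2}` of a complex matrix. -/
noncomputable def matrixAbs {d : ℕ} (a : Matrix (Fin d) (Fin d) ℂ) :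
    Matrix (Fin d) (Fin d) ℂ :=
  ((Matrix.posSemidef_conjTranspose_mul_self a).1.eigenvectorUnitary : Matrix (Fin d) (Fin d) ℂ) *
    diagonal (((↑) : ℝ → ℂ) ∘ (Real.sqrt ∘ (Matrix.posSemidef_conjTranspose_mul_self a).1.eigenvalues)) *
    (star (Matrix.posSemidef_conjTranspose_mul_self a).1.eigenvectorUnitary : Matrix (Fin d) (Fin d) ℂ)

/-- The generalized inner product `[ξ, ζ] = ξ ⊗ ζ` on the Hilbert `M_d(ℂ)`-module
`H_d = ℂ^d`: the rank-one matrix `(ξ ⊗ ζ) i j = ξ i * conj (ζ j)`. -/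
def rankOneMat {d : ℕ} (ξ ζ : Fin d → ℂ) : Matrix (Fin d) (Fin d) ℂ :=
  Matrix.of fun i j => ξ i * star (ζ j)

lemma rankOneMat_posSemidef {d : ℕ} (ζ : Fin d → ℂ) :
    (rankOneMat ζ ζ).PosSemidef := by
  have : rankOneMat ζ ζ =
      (Matrix.of fun (_ : Fin 1) j => star (ζ j))ᴴ *
      (Matrix.of fun (_ : Fin 1) j => star (ζ j)) := by
    ext i j
    simp [rankOneMat, Matrix.mul_apply, Matrix.conjTranspose_apply, Fin.sum_univ_succ]
  rw [this]
  exact Matrix.posSemidef_conjTranspose_mul_self _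

section

open scoped MatrixOrder

lemma matrixAbs_rankOneMat_self {d : ℕ} (ζ : Fin d → ℂ) :
    matrixAbs (rankOneMat ζ ζ) = rankOneMat ζ ζ := by
  have hP := rankOneMat_posSemidef ζ
  have hH := (Matrix.posSemidef_conjTranspose_mul_self (rankOneMat ζ ζ)).1
  have h1 : matrixAbs (rankOneMat ζ ζ) = hH.cfc Real.sqrt := rfl
  have h0 : 0 ≤ (rankOneMat ζ ζ)ᴴ * rankOneMat ζ ζ := by
    exact Matrix.nonneg_iff_posSemidef.mpr (Matrix.posSemidef_conjTranspose_mul_self _)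
  rw [h1, ← hH.cfc_eq, ← cfcₙ_eq_cfc, ← CFC.sqrt_eq_real_sqrt _ h0, hP.1.eq,
    CFC.sqrt_mul_self _ (Matrix.nonneg_iff_posSemidef.mpr hP)]

end

/-- Any map `T` on the Hilbert `M_d(ℂ)`-module `H_d = ℂ^d` satisfying
`|[Tξ, Tζ]| = |[ξ, ζ]|` is a pointwise unimodular multiple of the identity. -/
theorem stmt16 (d : ℕ) (T : (Fin d → ℂ) → (Fin d → ℂ))
    (hT : ∀ ξ ζ : Fin d → ℂ,
      matrixAbs (rankOneMat (T ξ) (T ζ)) = matrixAbs (rankOneMat ξ ζ)) :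
    ∀ ζ : Fin d → ℂ, ∃ μ : ℂ, ‖μ‖ = 1 ∧ T ζ = μ • ζ := by
  intro ζ
  have key : rankOneMat (T ζ) (T ζ) = rankOneMat ζ ζ := by
    have := hT ζ ζ
    rwa [matrixAbs_rankOneMat_self, matrixAbs_rankOneMat_self] at this
  have keyij : ∀ i j, T ζ i * star (T ζ j) = ζ i * star (ζ j) := by
    intro i j
    have := congrFun (congrFun (congrArg (fun M : Matrix (Fin d) (Fin d) ℂ => M) key) i) j
    simpa [rankOneMat] using this
  by_cases hz : ζ = 0
  · refine ⟨1, by simp, ?_⟩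
    subst hz
    funext i
    have h := keyij i i
    simp only [Pi.zero_apply, star_zero, mul_zero] at h
    rcases mul_eq_zero.mp h with h' | h'
    · simpa using h'
    · simpa using star_eq_zero.mp h'
  · obtain ⟨j, hj⟩ : ∃ j, ζ j ≠ 0 := by
      by_contra h
      push_neg at h
      exact hz (funext h)
    have hd := keyij j j
    have hnsq : (Complex.normSq (T ζ j) : ℂ) = (Complex.normSq (ζ j) : ℂ) := by
      rw [← Complex.mul_conj, ← Complex.mul_conj]; exact hd
    have hnsq' : Complex.normSq (T ζ j) = Complex.normSq (ζ j) := by exact_mod_cast hnsq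
    have habs : ‖T ζ j‖ = ‖ζ j‖ := by
      rw [Complex.norm_def, Complex.norm_def, hnsq']
    have hTj : T ζ j ≠ 0 := by
      intro h0
      apply hj
      rw [← Complex.normSq_eq_zero, ← hnsq', h0, map_zero]
    refine ⟨T ζ j / ζ j, ?_, ?_⟩
    · rw [norm_div, habs, div_self (norm_ne_zero_iff.mpr hj)]
    · funext i
      have h := keyij i j
      have h3 : T ζ i * ζ j = T ζ j * ζ i := by
        have hsj : (star (ζ j) : ℂ) ≠ 0 := star_ne_zero.mpr hj
        apply mul_right_cancel₀ hsj
        linear_combination T ζ j * h - T ζ i * hd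
      show T ζ i = (T ζ j / ζ j) * ζ i
      rw [div_mul_eq_mul_div, eq_div_iff hj]
      linear_combination h3
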